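/- arXiv:1910.12410 — 6 statements merged into one kernel-verified Lean document; each statement's English description precedes it below -/
import Mathlib

section
/- Fix a complex number q with |q| < 1 and define, for x \in \mathbb{C}, \(H_1(x) = \sum_{i,j,k\ge 0} (-1)^k \frac{q^{(i+2j+3k)(i+2j+3k-1)+3k^2+i+6j+6k}}{(q;q)_i (q^4;q^4)_j (q^6;q^6)_k}\, x^{i+2j+3k}\). Then for every x \in \mathbb{C}: \(H_1(x) - (1 + qx + q^2 x - q^3 x)\,H_1(q^2 x) - q^3 x\,(1 - q^2 x + q^3 x + q^4 x)\,H_1(q^4 x) + q^8 x^2\,(q^4 x - 1)\,H_1(q^6 x) = 0\). -/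
/-- The finite q-Pochhammer symbol `(a; q)_n = ∏_{m=0}^{n-1} (1 - a qᵐ)`. -/
noncomputable def qPoch (a q : ℂ) (n : ℕ) : ℂ := ∏ m ∈ Finset.range n, (1 - a * q ^ m)

/-- The Kanade–Russell series
`H₁(x) = ∑_{i,j,k ≥ 0} (-1)^k q^{(i+2j+3k)(i+2j+3k-1)+3k²+i+6j+6k}
         / ((q;q)_i (q⁴;q⁴)_j (q⁶;q⁶)_k) · x^{i+2j+3k}`. -/
noncomputable def H1 (q x : ℂ) : ℂ :=
  ∑' p : ℕ × ℕ × ℕ,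
    (-1 : ℂ) ^ p.2.2 *
      q ^ ((p.1 + 2 * p.2.1 + 3 * p.2.2) * (p.1 + 2 * p.2.1 + 3 * p.2.2 - 1)
          + 3 * p.2.2 ^ 2 + p.1 + 6 * p.2.1 + 6 * p.2.2) /
      (qPoch q q p.1 * qPoch (q ^ 4) (q ^ 4) p.2.1 * qPoch (q ^ 6) (q ^ 6) p.2.2) *
      x ^ (p.1 + 2 * p.2.1 + 3 * p.2.2)

/-!
Grouping the triple sum by `N = i + 2j + 3k` writes `H₁(x) = ∑ q^(N(N-1)) f_N x^N`, where by
Euler's expansions `∑ f_N z^N = f(z) = (q⁹z³;q⁶)_∞ / ((qz;q)_∞ (q⁶z²;q⁴)_∞)`. Under the weight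
`q^(N(N-1))`, multiplying the series by `z` becomes `H(x) ↦ x H(q²x)` and substituting `q²z` for `z`
becomes `H(x) ↦ H(q²x)`, so the `q`-shift equation is the image of the power series identity
`(1 + q³z + q⁶z²) f(q²z) = (1 - qz)(1 - q²z)(1 + q³z) f(z)`. That identity is the evident
`(1 - qz)(1 - q²z)(1 - q⁶z²) f(z) = (1 - q⁹z³) f(q²z)` divided by `1 - q³z`.
-/

open PowerSeries Finset

lemma qPoch_succ (a q : ℂ) (n : ℕ) : qPoch a q (n + 1) = qPoch a q n * (1 - a * q ^ n) :=
  prod_range_succ _ _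

lemma one_sub_pow_le_norm_qPoch {a : ℂ} {r : ℝ} (ha : ‖a‖ ≤ r) (hr : r < 1) (n : ℕ) :
    (1 - r) ^ n ≤ ‖qPoch a a n‖ := by
  rw [qPoch, norm_prod, pow_eq_prod_const]
  refine prod_le_prod (fun _ _ => by linarith) fun m _ => ?_
  have hm : ‖a‖ ^ (m + 1) ≤ ‖a‖ := pow_le_of_le_one (norm_nonneg a) (ha.trans hr.le) m.succ_ne_zero
  calc 1 - r ≤ 1 - ‖a‖ ^ (m + 1) := by linarith
    _ = ‖(1 : ℂ)‖ - ‖a * a ^ m‖ := by rw [norm_one, ← pow_succ', norm_pow]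
    _ ≤ ‖1 - a * a ^ m‖ := norm_sub_norm_le _ _

lemma qPoch_ne_zero {a : ℂ} (ha : ‖a‖ < 1) (n : ℕ) : qPoch a a n ≠ 0 :=
  norm_pos_iff.mp <| (pow_pos (by linarith) n).trans_le (one_sub_pow_le_norm_qPoch le_rfl ha n)

/-- Euler's expansion of `1 / (bz;a)_∞`. -/
noncomputable def invQPochSeries (a b : ℂ) : ℂ⟦X⟧ := mk fun n => b ^ n / qPoch a a n

/-- Euler's expansion of `(bz;a)_∞`. -/
noncomputable def qPochSeries (a b : ℂ) : ℂ⟦X⟧ :=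
  mk fun n => (-1) ^ n * a ^ n.choose 2 * b ^ n / qPoch a a n

lemma rescale_invQPochSeries {a : ℂ} (ha : ‖a‖ < 1) (b : ℂ) :
    rescale a (invQPochSeries a b) = (1 - C b * X) * invQPochSeries a b := by
  ext (_ | n)
  · simp [invQPochSeries, qPoch]
  · have h₁ := qPoch_ne_zero ha n
    have h₂ : 1 - a * a ^ n ≠ 0 :=
      right_ne_zero_of_mul (qPoch_succ a a n ▸ qPoch_ne_zero ha (n + 1))
    simp only [invQPochSeries, coeff_rescale, coeff_mk, sub_mul, one_mul, mul_assoc, map_sub,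
      coeff_C_mul, coeff_succ_X_mul, qPoch_succ]
    field_simp
    ring

lemma qPochSeries_eq_mul_rescale {a : ℂ} (ha : ‖a‖ < 1) (b : ℂ) :
    qPochSeries a b = (1 - C b * X) * rescale a (qPochSeries a b) := by
  ext (_ | n)
  · simp [qPochSeries, qPoch, coeff_mul, coeff_rescale, -coeff_zero_eq_constantCoeff]
  · have h₁ := qPoch_ne_zero ha n
    have h₂ : 1 - a * a ^ n ≠ 0 :=
      right_ne_zero_of_mul (qPoch_succ a a n ▸ qPoch_ne_zero ha (n + 1))
    simp only [qPochSeries, coeff_rescale, coeff_mk, sub_mul, one_mul, mul_assoc, map_sub,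
      coeff_C_mul, coeff_succ_X_mul, Nat.choose_succ_succ', Nat.choose_one_right, qPoch_succ]
    field_simp
    ring

section PowerSeries

variable {R : Type*} [CommRing R]

lemma rescale_C (a r : R) : rescale a (C r) = C r := by
  ext (_ | n) <;> simp [coeff_rescale, coeff_C]

lemma expand_rescale (p : ℕ) (hp : p ≠ 0) (a : R) (φ : R⟦X⟧) :
    expand p hp (rescale (a ^ p) φ) = rescale a (expand p hp φ) := by
  ext n
  simp only [coeff_expand, coeff_rescale]
  split_ifs with h
  · obtain ⟨m, rfl⟩ := h
    rw [Nat.mul_div_cancel_left _ (Nat.pos_of_ne_zero hp), ← pow_mul]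
  · simp

lemma expand_one_sub_C_mul_X (p : ℕ) (hp : p ≠ 0) (b : R) :
    expand p hp (1 - C b * X) = 1 - C b * X ^ p := by
  simp [expand_C]

end PowerSeries

/-- The product `(q⁹z³;q⁶)_∞ / ((qz;q)_∞ (q⁶z²;q⁴)_∞)`. -/
noncomputable def H1Series (q : ℂ) : ℂ⟦X⟧ :=
  invQPochSeries q q * (expand 2 two_ne_zero (invQPochSeries (q ^ 4) (q ^ 6)) *
    expand 3 three_ne_zero (qPochSeries (q ^ 6) (q ^ 9)))

lemma H1Series_qShift {q : ℂ} (hq : ‖q‖ < 1) :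
    (1 + C (q ^ 3) * X + C (q ^ 6) * X ^ 2) * rescale (q ^ 2) (H1Series q) =
      (1 - C q * X) * (1 - C (q ^ 2) * X) * (1 + C (q ^ 3) * X) * H1Series q := by
  have hq_pow : ∀ s ≠ 0, ‖q ^ s‖ < 1 := fun s hs => by
    simpa [norm_pow] using pow_lt_one₀ (norm_nonneg q) hq hs
  set A := invQPochSeries q q
  set B := expand 2 two_ne_zero (invQPochSeries (q ^ 4) (q ^ 6))
  set E := expand 3 three_ne_zero (qPochSeries (q ^ 6) (q ^ 9))
  have hA : rescale (q ^ 2) A = (1 - C (q ^ 2) * X) * (1 - C q * X) * A := by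
    rw [sq, ← rescale_rescale, rescale_invQPochSeries hq, map_mul, rescale_invQPochSeries hq,
      map_sub, map_one, map_mul, rescale_C, rescale_X, map_mul]
    ring
  have hB : rescale (q ^ 2) B = (1 - C (q ^ 6) * X ^ 2) * B := by
    rw [← expand_rescale, ← pow_mul, rescale_invQPochSeries (hq_pow 4 (by norm_num)), map_mul,
      expand_one_sub_C_mul_X]
  have hE : E = (1 - C (q ^ 9) * X ^ 3) * rescale (q ^ 2) E := by
    rw [← expand_rescale, ← pow_mul, ← expand_one_sub_C_mul_X, ← map_mul,
      ← qPochSeries_eq_mul_rescale (hq_pow 6 (by norm_num))]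
  have hK : (1 - C (q ^ 3) * X : ℂ⟦X⟧) ≠ 0 := fun h => by simpa using congrArg constantCoeff h
  -- multiplied by `1 - q³X`, the claim reads `(1 - q⁹X³) f(q²X) = (1 - qX)(1 - q²X)(1 - q⁶X²) f`
  refine mul_left_cancel₀ hK ?_
  simp only [H1Series, map_mul, map_pow] at hA hB hE ⊢
  linear_combination
    ((1 - C q ^ 3 * X) * (1 + C q ^ 3 * X + C q ^ 6 * X ^ 2) * rescale (q ^ 2) B *
      rescale (q ^ 2) E) * hA +
    ((1 - C q ^ 3 * X) * (1 + C q ^ 3 * X + C q ^ 6 * X ^ 2) * (1 - C q ^ 2 * X) *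
      (1 - C q * X) * A * rescale (q ^ 2) E) * hB -
    ((1 - C q ^ 3 * X) * (1 - C q * X) * (1 - C q ^ 2 * X) * (1 + C q ^ 3 * X) * A * B) * hE

lemma add_mul_add_sub_one (n m : ℕ) :
    (n + m) * (n + m - 1) = n * (n - 1) + 2 * m * n + m * (m - 1) := by
  rcases n with _ | n <;> rcases m with _ | m <;> simp; ring

def IsGaussTransform (q : ℂ) (g : ℂ⟦X⟧) (h : ℂ → ℂ) : Prop :=
  ∀ x, HasSum (fun n => q ^ (n * (n - 1)) * x ^ n * coeff n g) (h x)

namespace IsGaussTransform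

variable {q : ℂ} {g g' : ℂ⟦X⟧} {h h' : ℂ → ℂ}

lemma unique (hg : IsGaussTransform q g h) (hg' : IsGaussTransform q g' h') (e : g = g') :
    h = h' :=
  funext fun x => (hg x).unique (e ▸ hg' x)

lemma add (hg : IsGaussTransform q g h) (hg' : IsGaussTransform q g' h') :
    IsGaussTransform q (g + g') (h + h') := fun x => by
  simpa only [map_add, mul_add, Pi.add_apply] using (hg x).add (hg' x)

lemma C_mul (hg : IsGaussTransform q g h) (a : ℂ) :
    IsGaussTransform q (C a * g) (fun x => a * h x) := fun x =>
  ((hg x).mul_left a).congr_fun fun n => by rw [coeff_C_mul]; ring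

lemma rescale (hg : IsGaussTransform q g h) (a : ℂ) :
    IsGaussTransform q (rescale a g) (fun x => h (a * x)) := fun x =>
  (hg (a * x)).congr_fun fun n => by rw [coeff_rescale, mul_pow]; ring

lemma X_pow_mul (hg : IsGaussTransform q g h) (m : ℕ) :
    IsGaussTransform q (X ^ m * g) (fun x => q ^ (m * (m - 1)) * x ^ m * h (q ^ (2 * m) * x)) :=
  fun x => by
  refine ((add_left_injective m).hasSum_iff fun n hn => ?_).mp ?_
  · rw [coeff_X_pow_mul', if_neg fun hmn => hn ⟨n - m, Nat.sub_add_cancel hmn⟩, mul_zero]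
  · refine ((hg (q ^ (2 * m) * x)).mul_left (q ^ (m * (m - 1)) * x ^ m)).congr_fun fun n => ?_
    simp only [Function.comp_apply, coeff_X_pow_mul', Nat.le_add_left, if_true,
      Nat.add_sub_cancel, add_mul_add_sub_one, pow_add, mul_pow, ← pow_mul]
    ring

end IsGaussTransform

section Regrouping

variable {α : Type*} [NormedAddCommGroup α] [CompleteSpace α]

lemma HasSum.sum_finset_fiberwise {β γ : Type*} {f : β → α} {σ : α} (hf : HasSum f σ)
    (g : β → γ) (T : γ → Finset β) (hT : ∀ c b, b ∈ T c ↔ g b = c) :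
    HasSum (fun c => ∑ b ∈ T c, f b) σ := by
  refine (hf.tsum_fiberwise g).congr_fun fun c => ?_
  have hTc : g ⁻¹' {c} = ↑(T c) := by ext b; simp [hT]
  rw [← Finset.tsum_subtype', ← hTc]

lemma hasSum_coeff_mul_mul {R : Type*} [NormedCommRing R] [CompleteSpace R] {w : ℕ → R}
    {A B E : R⟦X⟧} {σ : R}
    (h : HasSum (fun p : ℕ × ℕ × ℕ =>
      w (p.1 + p.2.1 + p.2.2) * (coeff p.1 A * (coeff p.2.1 B * coeff p.2.2 E))) σ) :
    HasSum (fun n => w n * coeff n (A * (B * E))) σ := by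
  have h₁ := h.sum_finset_fiberwise (fun p => (p.1, p.2.1 + p.2.2))
    (fun im => {im.1} ×ˢ antidiagonal im.2) (by simp [Prod.ext_iff, eq_comm, and_comm])
  have h₂ := h₁.sum_finset_fiberwise (fun im => im.1 + im.2) antidiagonal (by simp)
  refine h₂.congr_fun fun n => ?_
  simp only [coeff_mul, mul_sum, sum_product, sum_singleton]
  refine sum_congr rfl fun im him => sum_congr rfl fun st hst => ?_
  rw [HasAntidiagonal.mem_antidiagonal] at him hst
  rw [← hst, ← add_assoc] at him
  rw [him]

end Regrouping

lemma summable_pow_sq_mul_pow {r : ℝ} (hr₀ : 0 ≤ r) (hr : r < 1) (R : ℝ) :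
    Summable fun n : ℕ => r ^ (n ^ 2) * R ^ n := by
  have hlim : Filter.Tendsto (fun n : ℕ => r ^ n * ‖R‖) Filter.atTop (nhds 0) := by
    simpa using (tendsto_pow_atTop_nhds_zero_of_lt_one hr₀ hr).mul_const ‖R‖
  refine Summable.of_norm_bounded_eventually_nat summable_geometric_two ?_
  filter_upwards [hlim.eventually_le_const (by norm_num : (0 : ℝ) < 1 / 2)] with n hn
  calc ‖r ^ (n ^ 2) * R ^ n‖ = (r ^ n * ‖R‖) ^ n := by
        rw [norm_mul, norm_pow, norm_pow, Real.norm_of_nonneg hr₀, sq, pow_mul, mul_pow]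
    _ ≤ (1 / 2) ^ n := by gcongr

/-- The summand of `H1`, so that `H1 q x = ∑' p, H1Term q x p` holds by `rfl`. -/
noncomputable def H1Term (q x : ℂ) (p : ℕ × ℕ × ℕ) : ℂ :=
  (-1 : ℂ) ^ p.2.2 *
    q ^ ((p.1 + 2 * p.2.1 + 3 * p.2.2) * (p.1 + 2 * p.2.1 + 3 * p.2.2 - 1)
        + 3 * p.2.2 ^ 2 + p.1 + 6 * p.2.1 + 6 * p.2.2) /
    (qPoch q q p.1 * qPoch (q ^ 4) (q ^ 4) p.2.1 * qPoch (q ^ 6) (q ^ 6) p.2.2) *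
    x ^ (p.1 + 2 * p.2.1 + 3 * p.2.2)

lemma sq_add_sq_add_sq_le_H1_exponent (i j k : ℕ) :
    i ^ 2 + j ^ 2 + k ^ 2 ≤
      (i + 2 * j + 3 * k) * (i + 2 * j + 3 * k - 1) + 3 * k ^ 2 + i + 6 * j + 6 * k := by
  have h : ∀ n : ℕ, n * (n - 1) + n = n * n := fun n => by cases n <;> simp; ring
  nlinarith [h (i + 2 * j + 3 * k)]

lemma summable_H1Term {q : ℂ} (hq : ‖q‖ < 1) (x : ℂ) : Summable (H1Term q x) := by
  set r := ‖q‖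
  set B := max 1 ‖x‖
  have hr : 0 < 1 - r := by linarith
  have hg := summable_pow_sq_mul_pow (norm_nonneg q) hq (B ^ 3 / (1 - r))
  set g := fun n : ℕ => r ^ (n ^ 2) * (B ^ 3 / (1 - r)) ^ n
  have hg₀ : 0 ≤ g := fun n => by positivity
  refine Summable.of_norm_bounded (hg.mul_of_nonneg (hg.mul_of_nonneg hg hg₀ hg₀) hg₀
    (fun _ => by positivity)) fun ⟨i, j, k⟩ => ?_
  have hpow : ‖q ^ ((i + 2 * j + 3 * k) * (i + 2 * j + 3 * k - 1) + 3 * k ^ 2 + i + 6 * j + 6 * k)‖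
      ≤ r ^ (i ^ 2) * r ^ (j ^ 2) * r ^ (k ^ 2) := by
    rw [norm_pow, ← pow_add, ← pow_add]
    exact pow_le_pow_of_le_one (norm_nonneg q) hq.le (sq_add_sq_add_sq_le_H1_exponent i j k)
  have hx : ‖x ^ (i + 2 * j + 3 * k)‖ ≤ B ^ (3 * i) * B ^ (3 * j) * B ^ (3 * k) := by
    rw [norm_pow, ← pow_add, ← pow_add]
    calc ‖x‖ ^ (i + 2 * j + 3 * k) ≤ B ^ (i + 2 * j + 3 * k) := by gcongr; exact le_max_right _ _
      _ ≤ B ^ (3 * i + 3 * j + 3 * k) := pow_le_pow_right₀ (le_max_left _ _) (by omega)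
  have hden : (1 - r) ^ i * (1 - r) ^ j * (1 - r) ^ k ≤
      ‖qPoch q q i * qPoch (q ^ 4) (q ^ 4) j * qPoch (q ^ 6) (q ^ 6) k‖ := by
    have hs : ∀ s ≠ 0, ‖q ^ s‖ ≤ r := fun s hs => by
      rw [norm_pow]; exact pow_le_of_le_one (norm_nonneg q) hq.le hs
    rw [norm_mul, norm_mul]
    gcongr
    exacts [one_sub_pow_le_norm_qPoch le_rfl hq i,
      one_sub_pow_le_norm_qPoch (hs 4 (by norm_num)) hq j,
      one_sub_pow_le_norm_qPoch (hs 6 (by norm_num)) hq k]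
  calc ‖H1Term q x (i, j, k)‖
      = ‖q ^ ((i + 2 * j + 3 * k) * (i + 2 * j + 3 * k - 1) + 3 * k ^ 2 + i + 6 * j + 6 * k)‖ *
          ‖x ^ (i + 2 * j + 3 * k)‖ /
          ‖qPoch q q i * qPoch (q ^ 4) (q ^ 4) j * qPoch (q ^ 6) (q ^ 6) k‖ := by
        rw [H1Term, norm_mul, norm_div, norm_mul, norm_pow (-1 : ℂ), norm_neg, norm_one, one_pow,
          one_mul, div_mul_eq_mul_div]
    _ ≤ r ^ (i ^ 2) * r ^ (j ^ 2) * r ^ (k ^ 2) * (B ^ (3 * i) * B ^ (3 * j) * B ^ (3 * k)) /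
          ((1 - r) ^ i * (1 - r) ^ j * (1 - r) ^ k) := by
        gcongr
    _ = g i * (g j * g k) := by
        simp only [g, div_pow, pow_mul]
        field_simp

lemma H1Term_eq (q x : ℂ) (i j k : ℕ) :
    H1Term q x (i, j, k) = q ^ ((i + 2 * j + 3 * k) * (i + 2 * j + 3 * k - 1)) *
      x ^ (i + 2 * j + 3 * k) * (coeff i (invQPochSeries q q) *
        (coeff (2 * j) (expand 2 two_ne_zero (invQPochSeries (q ^ 4) (q ^ 6))) *
          coeff (3 * k) (expand 3 three_ne_zero (qPochSeries (q ^ 6) (q ^ 9))))) := by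
  have hk : 6 * k.choose 2 + 9 * k = 3 * k ^ 2 + 6 * k := by
    induction k with
    | zero => rfl
    | succ n ih => rw [Nat.choose_succ_succ', Nat.choose_one_right]; nlinarith
  have hexp : (i + 2 * j + 3 * k) * (i + 2 * j + 3 * k - 1) + 3 * k ^ 2 + i + 6 * j + 6 * k =
      (i + 2 * j + 3 * k) * (i + 2 * j + 3 * k - 1) + i + 6 * j + (6 * k.choose 2 + 9 * k) := by
    rw [hk]; ring
  simp only [H1Term, coeff_expand_mul, invQPochSeries, qPochSeries, coeff_mk, hexp, pow_add,
    pow_mul]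
  ring

lemma isGaussTransform_H1 {q : ℂ} (hq : ‖q‖ < 1) : IsGaussTransform q (H1Series q) (H1 q) :=
  fun x => by
  refine hasSum_coeff_mul_mul (w := fun n => q ^ (n * (n - 1)) * x ^ n) ?_
  have hinj : Function.Injective fun p : ℕ × ℕ × ℕ => (p.1, 2 * p.2.1, 3 * p.2.2) := by
    rintro ⟨i, j, k⟩ ⟨i', j', k'⟩ h
    simp only [Prod.mk.injEq] at h ⊢
    omega
  refine (hinj.hasSum_iff fun ⟨i, s, t⟩ hst => ?_).mp ?_
  · by_cases hs : 2 ∣ s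
    · have ht : ¬ 3 ∣ t := fun ht => hst ⟨(i, s / 2, t / 3), by
        simp [Nat.mul_div_cancel' hs, Nat.mul_div_cancel' ht]⟩
      simp [coeff_expand_of_not_dvd _ _ _ ht]
    · simp [coeff_expand_of_not_dvd _ _ _ hs]
  · exact (summable_H1Term hq x).hasSum.congr_fun fun ⟨i, j, k⟩ => (H1Term_eq q x i j k).symm

/-- The `q`-shift equation satisfied by `H₁(x)`:
`H₁(x) - (1 + qx + q²x - q³x) H₁(q²x) - q³x (1 - q²x + q³x + q⁴x) H₁(q⁴x)
  + q⁸x² (q⁴x - 1) H₁(q⁶x) = 0`. -/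
theorem H1_q_shift_equation (q : ℂ) (hq : ‖q‖ < 1) (x : ℂ) :
    H1 q x - (1 + q * x + q ^ 2 * x - q ^ 3 * x) * H1 q (q ^ 2 * x)
      - q ^ 3 * x * (1 - q ^ 2 * x + q ^ 3 * x + q ^ 4 * x) * H1 q (q ^ 4 * x)
      + q ^ 8 * x ^ 2 * (q ^ 4 * x - 1) * H1 q (q ^ 6 * x) = 0 := by
  have hH := isGaussTransform_H1 hq
  have hR := hH.rescale (q ^ 2)
  have hL := (hR.add ((hR.X_pow_mul 1).C_mul (q ^ 3))).add ((hR.X_pow_mul 2).C_mul (q ^ 6))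
  have hP := ((hH.add ((hH.X_pow_mul 1).C_mul (q ^ 3 - q - q ^ 2))).add
    ((hH.X_pow_mul 2).C_mul (q ^ 3 - q ^ 4 - q ^ 5))).add ((hH.X_pow_mul 3).C_mul (q ^ 6))
  have hS := H1Series_qShift hq
  simp only [map_pow] at hS
  have key := congrFun (hL.unique hP (by simp only [map_sub, map_pow]; linear_combination hS)) x
  simp only [Pi.add_apply, ← mul_assoc, ← pow_add] at key
  norm_num at key
  linear_combination -key
end

section
/- Let G_a, G_b, G_c : \mathbb{N} \to \mathbb{Z}[a,b,c,q] be the sequences of polynomials defined by G_a(0) = G_b(0) = G_c(0) = 1 and, for k \ge 1, G_a(k) = G_c(k-1) + a q^k G_a(k-1), G_b(k) = G_a(k) + b q^k G_b(k-1), G_c(k) = G_b(k) + c q^k G_b(k-1). Then for every k \ge 0: \((c q^{k+1} - a b q^{2k+3})\, G_b(k) + (1 + a q^{k+2} + b q^{k+2})\, G_b(k+1) - G_b(k+2) = 0\). -/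
open MvPolynomial

/-- The polynomial ring `ℤ[a,b,c,q]`. -/
noncomputable abbrev R4 : Type := MvPolynomial (Fin 4) ℤ

noncomputable def va : R4 := X 0
noncomputable def vb : R4 := X 1
noncomputable def vc : R4 := X 2
noncomputable def vq : R4 := X 3

/-! Eliminating `Ga` with the `Gb`-recurrence and then `Gc` with the `Gc`-recurrence turns the
`Ga`-recurrence at `k + 2` into a relation among `Gb k`, `Gb (k + 1)` and `Gb (k + 2)` alone. -/

theorem Gb_recurrence_of_coupled {R : Type*} [CommRing R] (a b c q : R) (Ga Gb Gc : ℕ → R)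
    (ha : ∀ k : ℕ, Ga (k + 1) = Gc k + a * q ^ (k + 1) * Ga k)
    (hb : ∀ k : ℕ, Gb (k + 1) = Ga (k + 1) + b * q ^ (k + 1) * Gb k)
    (hc : ∀ k : ℕ, Gc (k + 1) = Gb (k + 1) + c * q ^ (k + 1) * Gb k) (k : ℕ) :
    (c * q ^ (k + 1) - a * b * q ^ (2 * k + 3)) * Gb k
      + (1 + a * q ^ (k + 2) + b * q ^ (k + 2)) * Gb (k + 1) - Gb (k + 2) = 0 := by
  have hGa : Ga (k + 1) = Gb (k + 1) - b * q ^ (k + 1) * Gb k := by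
    rw [hb k]; ring
  rw [hb (k + 1), ha (k + 1), hc k, hGa]
  ring

theorem Gb_uncoupled_recurrence_general (Ga Gb Gc : ℕ → R4)
    (ha : ∀ k : ℕ, Ga (k + 1) = Gc k + va * vq ^ (k + 1) * Ga k)
    (hb : ∀ k : ℕ, Gb (k + 1) = Ga (k + 1) + vb * vq ^ (k + 1) * Gb k)
    (hc : ∀ k : ℕ, Gc (k + 1) = Gb (k + 1) + vc * vq ^ (k + 1) * Gb k) :
    ∀ k : ℕ,
      (vc * vq ^ (k + 1) - va * vb * vq ^ (2 * k + 3)) * Gb k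
        + (1 + va * vq ^ (k + 2) + vb * vq ^ (k + 2)) * Gb (k + 1)
        - Gb (k + 2) = 0 :=
  Gb_recurrence_of_coupled va vb vc vq Ga Gb Gc ha hb hc

/-- Weighted-words system for the gap matrix with rows (1,2,2),(1,1,2),(1,1,2):
if `Ga, Gb, Gc : ℕ → ℤ[a,b,c,q]` satisfy `Ga 0 = Gb 0 = Gc 0 = 1` and, for `k ≥ 1`,
`Ga k = Gc (k-1) + a q^k Ga (k-1)`, `Gb k = Ga k + b q^k Gb (k-1)`,
`Gc k = Gb k + c q^k Gb (k-1)`, then for every `k ≥ 0`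
`(c q^{k+1} - a b q^{2k+3}) Gb k + (1 + a q^{k+2} + b q^{k+2}) Gb (k+1) - Gb (k+2) = 0`. -/
theorem Gb_uncoupled_recurrence (Ga Gb Gc : ℕ → R4)
    (ha0 : Ga 0 = 1) (hb0 : Gb 0 = 1) (hc0 : Gc 0 = 1)
    (ha : ∀ k : ℕ, Ga (k + 1) = Gc k + va * vq ^ (k + 1) * Ga k)
    (hb : ∀ k : ℕ, Gb (k + 1) = Ga (k + 1) + vb * vq ^ (k + 1) * Gb k)
    (hc : ∀ k : ℕ, Gc (k + 1) = Gb (k + 1) + vc * vq ^ (k + 1) * Gb k) :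
    ∀ k : ℕ,
      (vc * vq ^ (k + 1) - va * vb * vq ^ (2 * k + 3)) * Gb k
        + (1 + va * vq ^ (k + 2) + vb * vq ^ (k + 2)) * Gb (k + 1)
        - Gb (k + 2) = 0 :=
  Gb_uncoupled_recurrence_general Ga Gb Gc ha hb hc
end

section
/- Let G_a, G_b, G_c : \mathbb{N} \to \mathbb{Z}[a,b,c,q] be the sequences of polynomials defined by G_a(0) = G_b(0) = G_c(0) = 1 and, for k \ge 1, G_a(k) = G_c(k-1) + a q^k G_a(k-1), G_b(k) = G_a(k) + b q^k G_b(k-1), G_c(k) = G_b(k) + c q^k G_b(k-1). Then for every k \ge 0: \((-c q^{k+3} + a b q^{2k+5})\, G_c(k+1) + (-1 - a q^{k+3} - b q^{k+3})\, G_c(k+2) + G_c(k+3) = 0\). -/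
open MvPolynomial

/-!
Eliminating `Ga` and `Gc` from the coupled system leaves a three-term recurrence for `Gb`
alone. Since `Gc (k+1) = Gb (k+1) + c q^(k+1) Gb k`, the recurrence for `Gc` at `k` is the one
for `Gb` at `k + 1` plus `c q^(k+3)` times the one for `Gb` at `k`.
-/

namespace WeightedWords

variable {R : Type*} [CommRing R] (a b c q : R) (Ga Gb Gc : ℕ → R)

theorem Gb_uncoupled_recurrence
    (ha : ∀ k, Ga (k + 1) = Gc k + a * q ^ (k + 1) * Ga k)
    (hb : ∀ k, Gb (k + 1) = Ga (k + 1) + b * q ^ (k + 1) * Gb k)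
    (hc : ∀ k, Gc (k + 1) = Gb (k + 1) + c * q ^ (k + 1) * Gb k) (k : ℕ) :
    Gb (k + 2) = (1 + (a + b) * q ^ (k + 2)) * Gb (k + 1)
      + (c * q ^ (k + 1) - a * b * q ^ (2 * k + 3)) * Gb k := by
  linear_combination hb (k + 1) + ha (k + 1) + hc k - a * q ^ (k + 2) * hb k

theorem Gc_uncoupled_recurrence_of_Gb
    (hGb : ∀ k, Gb (k + 2) = (1 + (a + b) * q ^ (k + 2)) * Gb (k + 1)
      + (c * q ^ (k + 1) - a * b * q ^ (2 * k + 3)) * Gb k)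
    (hc : ∀ k, Gc (k + 1) = Gb (k + 1) + c * q ^ (k + 1) * Gb k) (k : ℕ) :
    (-(c * q ^ (k + 3)) + a * b * q ^ (2 * k + 5)) * Gc (k + 1)
      + (-1 - a * q ^ (k + 3) - b * q ^ (k + 3)) * Gc (k + 2) + Gc (k + 3) = 0 := by
  rw [hc k, hc (k + 1), hc (k + 2)]
  linear_combination hGb (k + 1) + c * q ^ (k + 3) * hGb k

end WeightedWords

theorem Gc_uncoupled_recurrence_general (Ga Gb Gc : ℕ → R4)
    (ha : ∀ k : ℕ, Ga (k + 1) = Gc k + va * vq ^ (k + 1) * Ga k)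
    (hb : ∀ k : ℕ, Gb (k + 1) = Ga (k + 1) + vb * vq ^ (k + 1) * Gb k)
    (hc : ∀ k : ℕ, Gc (k + 1) = Gb (k + 1) + vc * vq ^ (k + 1) * Gb k) :
    ∀ k : ℕ,
      (-(vc * vq ^ (k + 3)) + va * vb * vq ^ (2 * k + 5)) * Gc (k + 1)
        + (-1 - va * vq ^ (k + 3) - vb * vq ^ (k + 3)) * Gc (k + 2)
        + Gc (k + 3) = 0 :=
  WeightedWords.Gc_uncoupled_recurrence_of_Gb va vb vc vq Gb Gc
    (WeightedWords.Gb_uncoupled_recurrence va vb vc vq Ga Gb Gc ha hb hc) hc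

/-- Weighted-words system for the gap matrix with rows (1,2,2),(1,1,2),(1,1,2):
if `Ga, Gb, Gc : ℕ → ℤ[a,b,c,q]` satisfy `Ga 0 = Gb 0 = Gc 0 = 1` and, for `k ≥ 1`,
`Ga k = Gc (k-1) + a q^k Ga (k-1)`, `Gb k = Ga k + b q^k Gb (k-1)`,
`Gc k = Gb k + c q^k Gb (k-1)`, then for every `k ≥ 0`
`(-c q^{k+3} + a b q^{2k+5}) Gc (k+1) + (-1 - a q^{k+3} - b q^{k+3}) Gc (k+2)
  + Gc (k+3) = 0`. -/
theorem Gc_uncoupled_recurrence (Ga Gb Gc : ℕ → R4)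
    (ha0 : Ga 0 = 1) (hb0 : Gb 0 = 1) (hc0 : Gc 0 = 1)
    (ha : ∀ k : ℕ, Ga (k + 1) = Gc k + va * vq ^ (k + 1) * Ga k)
    (hb : ∀ k : ℕ, Gb (k + 1) = Ga (k + 1) + vb * vq ^ (k + 1) * Gb k)
    (hc : ∀ k : ℕ, Gc (k + 1) = Gb (k + 1) + vc * vq ^ (k + 1) * Gb k) :
    ∀ k : ℕ,
      (-(vc * vq ^ (k + 3)) + va * vb * vq ^ (2 * k + 5)) * Gc (k + 1)
        + (-1 - va * vq ^ (k + 3) - vb * vq ^ (k + 3)) * Gc (k + 2)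
        + Gc (k + 3) = 0 :=
  Gc_uncoupled_recurrence_general Ga Gb Gc ha hb hc
end

section
/- Let G_a, G_b, G_c : \mathbb{N} \to \mathbb{Z}[a,b,c,q] be the sequences of polynomials defined by G_a(0) = G_b(0) = G_c(0) = 1 and, for k \ge 1, G_a(k) = G_c(k-1) + a q^k G_a(k-1), G_b(k) = G_a(k) + b q^k G_b(k-1), G_c(k) = G_b(k) + c q^k G_b(k-1). Define u(k) to be the polynomial G_c(k+1) with c replaced by a b q, and v(k) to be the polynomial G_b(k) with a, b, c replaced by a q, b q, a b q^3 respectively. Then both w = u and w = v satisfy, for every k \ge 0, the same recurrence \((a b q^{k+4} - a b q^{2k+5})\, w(k) + (1 + a q^{k+3} + b q^{k+3})\, w(k+1) - w(k+2) = 0\). -/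
open MvPolynomial

/-- The substitution homomorphism `a ↦ a, b ↦ b, c ↦ a b q, q ↦ q` on `ℤ[a,b,c,q]`. -/
noncomputable def substC : R4 →ₐ[ℤ] R4 := aeval ![va, vb, va * vb * vq, vq]

/-- The substitution homomorphism `a ↦ a q, b ↦ b q, c ↦ a b q³, q ↦ q` on `ℤ[a,b,c,q]`. -/
noncomputable def substQ : R4 →ₐ[ℤ] R4 := aeval ![va * vq, vb * vq, va * vb * vq ^ 3, vq]


/-!
Eliminating `Ga` and `Gc` leaves a three-term recurrence for `Gb` alone,
`Gb (k+2) = (1 + (a+b) q^(k+2)) Gb (k+1) + (c q^(k+1) - a b q^(2k+3)) Gb k`.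
Under `a, b, c ↦ a q, b q, a b q³` this is already the claimed recurrence for `v`.
Under `c ↦ a b q` we get `u k = Gb (k+1) + a b q^(k+2) Gb k`, and the claimed recurrence for `u`
is a combination of the `Gb`-recurrence at `k` and at `k+1`.
Both substitutions are ring homomorphisms, so they carry a solution of the system to a solution
of the system with substituted parameters.
-/

namespace GapSystem

variable {R S : Type*} [CommRing R] [CommRing S]

structure IsSolution (a b c q : R) (Ga Gb Gc : ℕ → R) : Prop where
  ha : ∀ k : ℕ, Ga (k + 1) = Gc k + a * q ^ (k + 1) * Ga k
  hb : ∀ k : ℕ, Gb (k + 1) = Ga (k + 1) + b * q ^ (k + 1) * Gb k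
  hc : ∀ k : ℕ, Gc (k + 1) = Gb (k + 1) + c * q ^ (k + 1) * Gb k

def SatisfiesRec (a b q : R) (w : ℕ → R) : Prop :=
  ∀ k : ℕ, (a * b * q ^ (k + 4) - a * b * q ^ (2 * k + 5)) * w k
    + (1 + a * q ^ (k + 3) + b * q ^ (k + 3)) * w (k + 1) - w (k + 2) = 0

namespace IsSolution

variable {a b c q : R} {Ga Gb Gc : ℕ → R}

theorem map {F : Type*} [FunLike F R S] [RingHomClass F R S] (f : F)
    (h : IsSolution a b c q Ga Gb Gc) :
    IsSolution (f a) (f b) (f c) (f q) (f ∘ Ga) (f ∘ Gb) (f ∘ Gc) where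
  ha k := by simp [h.ha k]
  hb k := by simp [h.hb k]
  hc k := by simp [h.hc k]

theorem gb_add_two (h : IsSolution a b c q Ga Gb Gc) (k : ℕ) :
    Gb (k + 2) = (1 + (a + b) * q ^ (k + 2)) * Gb (k + 1)
      + (c * q ^ (k + 1) - a * b * q ^ (2 * k + 3)) * Gb k := by
  linear_combination h.hb (k + 1) + h.ha (k + 1) + h.hc k - a * q ^ (k + 2) * h.hb k

theorem satisfiesRec_gb_of_scaled (h : IsSolution (a * q) (b * q) (a * b * q ^ 3) q Ga Gb Gc) :
    SatisfiesRec a b q Gb := by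
  intro k
  linear_combination -h.gb_add_two k

theorem satisfiesRec_gc_succ (h : IsSolution a b (a * b * q) q Ga Gb Gc) :
    SatisfiesRec a b q (fun k => Gc (k + 1)) := by
  intro k
  simp only [h.hc]
  linear_combination (-(a * b * q ^ (k + 4))) * h.gb_add_two k - h.gb_add_two (k + 1)

end IsSolution

end GapSystem

open GapSystem

theorem u_and_v_same_recurrence_general (Ga Gb Gc : ℕ → R4)
    (ha : ∀ k : ℕ, Ga (k + 1) = Gc k + va * vq ^ (k + 1) * Ga k)
    (hb : ∀ k : ℕ, Gb (k + 1) = Ga (k + 1) + vb * vq ^ (k + 1) * Gb k)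
    (hc : ∀ k : ℕ, Gc (k + 1) = Gb (k + 1) + vc * vq ^ (k + 1) * Gb k)
    (u v : ℕ → R4)
    (hu : ∀ k : ℕ, u k = substC (Gc (k + 1)))
    (hv : ∀ k : ℕ, v k = substQ (Gb k)) :
    (∀ k : ℕ,
      (va * vb * vq ^ (k + 4) - va * vb * vq ^ (2 * k + 5)) * u k
        + (1 + va * vq ^ (k + 3) + vb * vq ^ (k + 3)) * u (k + 1) - u (k + 2) = 0) ∧
    (∀ k : ℕ,
      (va * vb * vq ^ (k + 4) - va * vb * vq ^ (2 * k + 5)) * v k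
        + (1 + va * vq ^ (k + 3) + vb * vq ^ (k + 3)) * v (k + 1) - v (k + 2) = 0) := by
  have hG : IsSolution va vb vc vq Ga Gb Gc := ⟨ha, hb, hc⟩
  obtain rfl : u = fun k => substC (Gc (k + 1)) := funext hu
  obtain rfl : v = fun k => substQ (Gb k) := funext hv
  have hC := hG.map substC
  have hQ := hG.map substQ
  simp only [substC, substQ, va, vb, vc, vq, aeval_X] at hC hQ
  exact ⟨hC.satisfiesRec_gc_succ, hQ.satisfiesRec_gb_of_scaled⟩

/-- Weighted-words system for the gap matrix with rows (1,2,2),(1,1,2),(1,1,2):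
with `Ga, Gb, Gc` as usual, set `u k = Gc (k+1) [c ↦ a b q]` and
`v k = Gb k [a ↦ a q, b ↦ b q, c ↦ a b q³]`.  Then both `w = u` and `w = v` satisfy
`(a b q^{k+4} - a b q^{2k+5}) w k + (1 + a q^{k+3} + b q^{k+3}) w (k+1) - w (k+2) = 0`
for all `k ≥ 0`. -/
theorem u_and_v_same_recurrence (Ga Gb Gc : ℕ → R4)
    (ha0 : Ga 0 = 1) (hb0 : Gb 0 = 1) (hc0 : Gc 0 = 1)
    (ha : ∀ k : ℕ, Ga (k + 1) = Gc k + va * vq ^ (k + 1) * Ga k)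
    (hb : ∀ k : ℕ, Gb (k + 1) = Ga (k + 1) + vb * vq ^ (k + 1) * Gb k)
    (hc : ∀ k : ℕ, Gc (k + 1) = Gb (k + 1) + vc * vq ^ (k + 1) * Gb k)
    (u v : ℕ → R4)
    (hu : ∀ k : ℕ, u k = substC (Gc (k + 1)))
    (hv : ∀ k : ℕ, v k = substQ (Gb k)) :
    (∀ k : ℕ,
      (va * vb * vq ^ (k + 4) - va * vb * vq ^ (2 * k + 5)) * u k
        + (1 + va * vq ^ (k + 3) + vb * vq ^ (k + 3)) * u (k + 1) - u (k + 2) = 0) ∧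
    (∀ k : ℕ,
      (va * vb * vq ^ (k + 4) - va * vb * vq ^ (2 * k + 5)) * v k
        + (1 + va * vq ^ (k + 3) + vb * vq ^ (k + 3)) * v (k + 1) - v (k + 2) = 0) :=
  u_and_v_same_recurrence_general Ga Gb Gc ha hb hc u v hu hv
end

section
/- Let G_a, G_b, G_c : \mathbb{N} \to \mathbb{Z}[a,b,c,q] be the sequences of polynomials defined by G_a(0) = G_b(0) = G_c(0) = 1 and, for k \ge 1, G_a(k) = G_c(k-1) + a q^k G_a(k-1), G_b(k) = G_a(k) + b q^k G_b(k-1), G_c(k) = G_b(k) + c q^k G_b(k-1). Then for every k \ge 1, the polynomial G_c(k+1) with c replaced by a b q equals (1 + a q)(1 + b q) times the polynomial G_b(k) with a, b, c replaced by a q, b q, a b q^3 respectively. -/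
open MvPolynomial

/-!
Eliminating `G_a` and `G_c` leaves the second-order recurrence
`G_b(k+2) = (1 + (a+b) q^{k+2}) G_b(k+1) + (c - a b q^{k+2}) q^{k+1} G_b(k)`,
which commutes with any substitution of `a, b, c, q`. Writing `H_{a,b}` for `G_b` at `c = a b q`,
the identity `H_{a,b}(k+1) + a b q^{k+2} H_{a,b}(k) = (1 + a q)(1 + b q) H_{aq,bq}(k)` then follows
by two-step induction from these recurrences alone; note that `c ↦ a b q³` is `c = a' b' q` for
`a' = a q`, `b' = b q`. Finally `G_c(k+1) = G_b(k+1) + c q^{k+1} G_b(k)` becomes its left-hand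
side under `c ↦ a b q`.
-/

section Recurrence

variable {R : Type*} [CommRing R]

def gbSeq (a b c q : R) : ℕ → R
  | 0 => 1
  | 1 => 1 + (a + b) * q
  | k + 2 => (1 + (a + b) * q ^ (k + 2)) * gbSeq a b c q (k + 1)
      + (c - a * b * q ^ (k + 2)) * q ^ (k + 1) * gbSeq a b c q k

theorem gbSeq_add_two (a b c q : R) (k : ℕ) :
    gbSeq a b c q (k + 2) = (1 + (a + b) * q ^ (k + 2)) * gbSeq a b c q (k + 1)
      + (c - a * b * q ^ (k + 2)) * q ^ (k + 1) * gbSeq a b c q k := rfl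

theorem eq_gbSeq_of_recurrence {a b c q : R} {Ga Gb Gc : ℕ → R}
    (ha0 : Ga 0 = 1) (hb0 : Gb 0 = 1) (hc0 : Gc 0 = 1)
    (ha : ∀ k : ℕ, Ga (k + 1) = Gc k + a * q ^ (k + 1) * Ga k)
    (hb : ∀ k : ℕ, Gb (k + 1) = Ga (k + 1) + b * q ^ (k + 1) * Gb k)
    (hc : ∀ k : ℕ, Gc (k + 1) = Gb (k + 1) + c * q ^ (k + 1) * Gb k) :
    Gb = gbSeq a b c q := by
  have hrec : ∀ k : ℕ, Gb (k + 2) = (1 + (a + b) * q ^ (k + 2)) * Gb (k + 1)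
      + (c - a * b * q ^ (k + 2)) * q ^ (k + 1) * Gb k := fun k => by
    linear_combination hb (k + 1) + ha (k + 1) + hc k - a * q ^ (k + 2) * hb k
  funext k
  induction k using Nat.twoStepInduction with
  | zero => exact hb0
  | one => rw [hb 0, ha 0, ha0, hb0, hc0, gbSeq]; ring
  | more k ih0 ih1 => rw [hrec, ih0, ih1, gbSeq_add_two]

theorem map_gbSeq {S F : Type*} [CommRing S] [FunLike F R S] [RingHomClass F R S] (f : F)
    (a b c q : R) (k : ℕ) :
    f (gbSeq a b c q k) = gbSeq (f a) (f b) (f c) (f q) k := by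
  induction k using Nat.twoStepInduction with
  | zero => simp [gbSeq]
  | one => simp [gbSeq]
  | more k ih0 ih1 => simp [gbSeq_add_two, ih0, ih1]

theorem gbSeq_functional_equation (a b q : R) (k : ℕ) :
    gbSeq a b (a * b * q) q (k + 1) + a * b * q ^ (k + 2) * gbSeq a b (a * b * q) q k
      = (1 + a * q) * (1 + b * q) * gbSeq (a * q) (b * q) (a * q * (b * q) * q) q k := by
  induction k using Nat.twoStepInduction with
  | zero => simp only [gbSeq]; ring
  | one => simp only [gbSeq]; ring
  | more k ih0 ih1 =>
    linear_combination gbSeq_add_two a b (a * b * q) q (k + 1)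
      + a * b * q ^ (k + 4) * gbSeq_add_two a b (a * b * q) q k
      - (1 + a * q) * (1 + b * q) * gbSeq_add_two (a * q) (b * q) (a * q * (b * q) * q) q k
      + (1 + (a + b) * q ^ (k + 3)) * ih1
      + (a * b * q ^ 3 - a * b * q ^ (k + 4)) * q ^ (k + 1) * ih0

end Recurrence

/-- Weighted-words functional relation (Alladi–Gordon/Schur setting): with `Ga, Gb, Gc`
as usual, for every `k ≥ 1`,
`Gc (k+1) [c ↦ a b q] = (1 + a q)(1 + b q) · Gb k [a ↦ a q, b ↦ b q, c ↦ a b q³]`. -/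
theorem Gc_Gb_functional_relation (Ga Gb Gc : ℕ → R4)
    (ha0 : Ga 0 = 1) (hb0 : Gb 0 = 1) (hc0 : Gc 0 = 1)
    (ha : ∀ k : ℕ, Ga (k + 1) = Gc k + va * vq ^ (k + 1) * Ga k)
    (hb : ∀ k : ℕ, Gb (k + 1) = Ga (k + 1) + vb * vq ^ (k + 1) * Gb k)
    (hc : ∀ k : ℕ, Gc (k + 1) = Gb (k + 1) + vc * vq ^ (k + 1) * Gb k) :
    ∀ k : ℕ, 1 ≤ k →
      substC (Gc (k + 1)) = (1 + va * vq) * (1 + vb * vq) * substQ (Gb k) := by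
  intro k _
  have hGb : Gb = gbSeq va vb vc vq := eq_gbSeq_of_recurrence ha0 hb0 hc0 ha hb hc
  have hC : substC va = va ∧ substC vb = vb ∧ substC vc = va * vb * vq ∧ substC vq = vq := by
    simp [substC, va, vb, vc, vq]
  have hQ : substQ va = va * vq ∧ substQ vb = vb * vq ∧
      substQ vc = va * vq * (vb * vq) * vq ∧ substQ vq = vq := by
    refine ⟨?_, ?_, ?_, ?_⟩ <;> simp [substQ, va, vb, vc, vq]; ring
  rw [hc, hGb, map_add, map_mul, map_mul, map_pow, map_gbSeq, map_gbSeq, map_gbSeq,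
    hC.1, hC.2.1, hC.2.2.1, hC.2.2.2, hQ.1, hQ.2.1, hQ.2.2.1, hQ.2.2.2,
    ← gbSeq_functional_equation]
  ring
end

section
/- Let G_a, G_b, G_c : \mathbb{N} \to \mathbb{Z}[a,b,c,q] be the sequences of polynomials defined by G_a(0) = G_b(0) = G_c(0) = 1 and, for k \ge 1, G_a(k) = G_c(k-1) + a q^k G_a(k-1), G_b(k) = G_a(k) + b q^k G_b(k-1), G_c(k) = G_b(k) + c q^k G_b(k-1). Let P(k) \in \mathbb{Z}[a,b][q] denote G_c(k) with c replaced by a b q. Then, viewing elements of \mathbb{Z}[a,b][[q]], for every N \ge 0 there exists K such that for all k \ge K the coefficient of q^N in P(k) equals the coefficient of q^N in the infinite product \(\prod_{i \ge 1} (1 + a q^i)(1 + b q^i)\). In other words, P(k) converges q-adically to \((-aq;q)_\infty (-bq;q)_\infty\) as k \to \infty (the Alladi–Gordon weighted-words version of Schur's theorem). -/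
/-!
Let `σ` be the shift `a ↦ a q, b ↦ b q` (fixing `q`) and `f = (1 + a q)(1 + b q)`, so that the
partial products `Π_k = ∏_{i=1}^k (1 + a qⁱ)(1 + b qⁱ)` satisfy `Π_{k+1} = f σ(Π_k)`. After the
substitution `c ↦ a b q`, the recurrences yield the `q`-difference equations
`B (k+1) = f σ(B k) - a b q^(k+2) B k` and `C (k+1) = f σ(B k)`. Since `σ` multiplies
`a b` by `q²`, an induction shows `a b q^(k+1) ∣ B k - Π_k`, hence `a b q^(k+2) ∣ C k - Π_k`,
so `C k` agrees with the infinite product up to `q^(k+1)`.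
-/

open MvPolynomial

/-- The ring `ℤ[a,b][q]` (polynomials in `q` with coefficients in `ℤ[a,b]`). -/
noncomputable abbrev S2 : Type := Polynomial (MvPolynomial (Fin 2) ℤ)

/-- `a` as an element of `ℤ[a,b][q]`. -/
noncomputable def sa : S2 := Polynomial.C (X 0)

/-- `b` as an element of `ℤ[a,b][q]`. -/
noncomputable def sb : S2 := Polynomial.C (X 1)

/-- The substitution homomorphism `ℤ[a,b,c,q] → ℤ[a,b][q]`,
`a ↦ a, b ↦ b, c ↦ a b q, q ↦ q`. -/
noncomputable def substCq : R4 →ₐ[ℤ] S2 :=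
  aeval ![sa, sb, sa * sb * Polynomial.X, Polynomial.X]

section QShift

variable {R : Type*} [CommRing R]

structure IsABShift (σ : R →+* R) (a b q : R) : Prop where
  map_a : σ a = a * q
  map_b : σ b = b * q
  map_q : σ q = q

/-- The weighted-words system of the theorem after the substitution `c ↦ a b q`. -/
structure IsSchurSystem (a b q : R) (A B C : ℕ → R) : Prop where
  A_zero : A 0 = 1
  B_zero : B 0 = 1
  C_zero : C 0 = 1
  A_succ : ∀ k, A (k + 1) = C k + a * q ^ (k + 1) * A k
  B_succ : ∀ k, B (k + 1) = A (k + 1) + b * q ^ (k + 1) * B k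
  C_succ : ∀ k, C (k + 1) = B (k + 1) + a * b * q ^ (k + 2) * B k

def abProd (a b q : R) (M : ℕ) : R :=
  ∏ i ∈ Finset.Icc 1 M, (1 + a * q ^ i) * (1 + b * q ^ i)

lemma abProd_zero (a b q : R) : abProd a b q 0 = 1 := by simp [abProd]

lemma abProd_succ (a b q : R) (k : ℕ) :
    abProd a b q (k + 1) = abProd a b q k * ((1 + a * q ^ (k + 1)) * (1 + b * q ^ (k + 1))) :=
  Finset.prod_Icc_succ_top (by omega) _

variable {σ : R →+* R} {a b q : R}

namespace IsABShift

lemma map_one_add_a_mul_pow (hσ : IsABShift σ a b q) (n : ℕ) :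
    σ (1 + a * q ^ n) = 1 + a * q ^ (n + 1) := by
  rw [map_add, map_one, map_mul, map_pow, hσ.map_a, hσ.map_q]; ring

lemma map_one_add_b_mul_pow (hσ : IsABShift σ a b q) (n : ℕ) :
    σ (1 + b * q ^ n) = 1 + b * q ^ (n + 1) := by
  rw [map_add, map_one, map_mul, map_pow, hσ.map_b, hσ.map_q]; ring

lemma map_ab_mul_pow (hσ : IsABShift σ a b q) (n : ℕ) :
    σ (a * b * q ^ n) = a * b * q ^ (n + 2) := by
  rw [map_mul, map_mul, map_pow, hσ.map_a, hσ.map_b, hσ.map_q]; ring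

lemma ab_mul_pow_dvd_map (hσ : IsABShift σ a b q) {n : ℕ} {x : R} (h : a * b * q ^ n ∣ x) :
    a * b * q ^ (n + 2) ∣ σ x :=
  hσ.map_ab_mul_pow n ▸ map_dvd σ h

lemma mul_map_abProd (hσ : IsABShift σ a b q) (k : ℕ) :
    (1 + a * q) * (1 + b * q) * σ (abProd a b q k) = abProd a b q (k + 1) := by
  induction k with
  | zero => simp [abProd_zero, abProd_succ]
  | succ k ih =>
    rw [abProd_succ, map_mul, map_mul, hσ.map_one_add_a_mul_pow, hσ.map_one_add_b_mul_pow,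
      abProd_succ (k := k + 1), ← ih]
    ring

end IsABShift

namespace IsSchurSystem

variable {A B C : ℕ → R}

lemma map_A_succ (hσ : IsABShift σ a b q) (h : IsSchurSystem a b q A B C) (k : ℕ) :
    σ (A (k + 1)) = σ (C k) + a * q ^ (k + 2) * σ (A k) := by
  rw [h.A_succ, map_add, map_mul, map_mul, map_pow, hσ.map_a, hσ.map_q]; ring

lemma map_B_succ (hσ : IsABShift σ a b q) (h : IsSchurSystem a b q A B C) (k : ℕ) :
    σ (B (k + 1)) = σ (A (k + 1)) + b * q ^ (k + 2) * σ (B k) := by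
  rw [h.B_succ, map_add, map_mul, map_mul, map_pow, hσ.map_b, hσ.map_q]; ring

lemma map_C_succ (hσ : IsABShift σ a b q) (h : IsSchurSystem a b q A B C) (k : ℕ) :
    σ (C (k + 1)) = σ (B (k + 1)) + a * b * q ^ (k + 4) * σ (B k) := by
  rw [h.C_succ, map_add, map_mul, hσ.map_ab_mul_pow]

lemma qDifference (hσ : IsABShift σ a b q) (h : IsSchurSystem a b q A B C) (n : ℕ) :
    B (n + 1) + a * b * q ^ (n + 2) * B n = (1 + a * q) * (1 + b * q) * σ (B n) ∧
      A (n + 2) + a * b * q ^ (n + 3) * A (n + 1) =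
        (1 + a * q) * (1 + b * q) * σ (A (n + 1)) := by
  induction n with
  | zero =>
    have hA1 : A 1 = 1 + a * q := by rw [h.A_succ, h.A_zero, h.C_zero]; ring
    refine ⟨?_, ?_⟩
    · rw [h.B_succ, hA1, h.B_zero, map_one]; ring
    · rw [h.A_succ, h.C_succ, h.B_succ, hA1, h.B_zero, map_add, map_one, map_mul,
        hσ.map_a, hσ.map_q]
      ring
  | succ n ih =>
    obtain ⟨ihB, ihA⟩ := ih
    have hB : B (n + 2) + a * b * q ^ (n + 3) * B (n + 1) =
        (1 + a * q) * (1 + b * q) * σ (B (n + 1)) := by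
      linear_combination h.B_succ (n + 1) - (1 + a * q) * (1 + b * q) * h.map_B_succ hσ n + ihA
        + b * q ^ (n + 2) * ihB + a * b * q ^ (n + 3) * h.B_succ n
    refine ⟨hB, ?_⟩
    linear_combination h.A_succ (n + 2) + h.C_succ (n + 1)
      - (1 + a * q) * (1 + b * q) * (h.map_A_succ hσ (n + 1) + h.map_C_succ hσ n) + hB
      + a * b * q ^ (n + 4) * (ihB + h.A_succ (n + 1) + h.C_succ n) + a * q ^ (n + 3) * ihA

lemma C_succ_eq (hσ : IsABShift σ a b q) (h : IsSchurSystem a b q A B C) (n : ℕ) :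
    C (n + 1) = (1 + a * q) * (1 + b * q) * σ (B n) := by
  rw [h.C_succ]; exact (h.qDifference hσ n).1

lemma dvd_B_sub_abProd (hσ : IsABShift σ a b q) (h : IsSchurSystem a b q A B C) (n : ℕ) :
    a * b * q ^ (n + 1) ∣ B n - abProd a b q n := by
  induction n with
  | zero => simp [h.B_zero, abProd_zero]
  | succ n ih =>
    have hrec : B (n + 1) - abProd a b q (n + 1) =
        (1 + a * q) * (1 + b * q) * σ (B n - abProd a b q n) - a * b * q ^ (n + 2) * B n := by
      rw [map_sub, mul_sub, hσ.mul_map_abProd, ← (h.qDifference hσ n).1]; ring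
    rw [hrec]
    refine dvd_sub (Dvd.dvd.mul_left ?_ _) (dvd_mul_right _ _)
    exact (mul_dvd_mul_left _ (pow_dvd_pow q (by omega))).trans (hσ.ab_mul_pow_dvd_map ih)

lemma dvd_C_sub_abProd (hσ : IsABShift σ a b q) (h : IsSchurSystem a b q A B C) (n : ℕ) :
    a * b * q ^ (n + 2) ∣ C n - abProd a b q n := by
  cases n with
  | zero => simp [h.C_zero, abProd_zero]
  | succ n =>
    rw [h.C_succ_eq hσ, ← hσ.mul_map_abProd, ← mul_sub, ← map_sub]
    exact (hσ.ab_mul_pow_dvd_map (h.dvd_B_sub_abProd hσ n)).mul_left _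

end IsSchurSystem

end QShift

noncomputable def abShift : S2 →+* S2 :=
  Polynomial.eval₂RingHom
    (aeval ![sa * Polynomial.X, sb * Polynomial.X] : MvPolynomial (Fin 2) ℤ →ₐ[ℤ] S2)
    Polynomial.X

lemma isABShift_abShift : IsABShift abShift sa sb Polynomial.X where
  map_a := by simp [abShift, sa]
  map_b := by simp [abShift, sb]
  map_q := by simp [abShift]

lemma isSchurSystem_substCq {Ga Gb Gc : ℕ → R4}
    (ha0 : Ga 0 = 1) (hb0 : Gb 0 = 1) (hc0 : Gc 0 = 1)
    (ha : ∀ k : ℕ, Ga (k + 1) = Gc k + va * vq ^ (k + 1) * Ga k)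
    (hb : ∀ k : ℕ, Gb (k + 1) = Ga (k + 1) + vb * vq ^ (k + 1) * Gb k)
    (hc : ∀ k : ℕ, Gc (k + 1) = Gb (k + 1) + vc * vq ^ (k + 1) * Gb k) :
    IsSchurSystem sa sb Polynomial.X (substCq ∘ Ga) (substCq ∘ Gb) (substCq ∘ Gc) where
  A_zero := by simp [ha0]
  B_zero := by simp [hb0]
  C_zero := by simp [hc0]
  A_succ k := by simp [ha, substCq, va, vq]
  B_succ k := by simp [-add_right_inj, hb, substCq, vb, vq]
  C_succ k := by simp [-add_right_inj, hc, substCq, vc, vq]; ring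

/-- The Alladi–Gordon weighted-words version of Schur's theorem: with `Ga, Gb, Gc` the
weighted-words system for the gap matrix with rows (1,2,2),(1,1,2),(1,1,2), let
`P k = Gc k [c ↦ a b q] ∈ ℤ[a,b][q]`, and let `F N` be the coefficient of `q^N` in the
infinite product `∏_{i ≥ 1} (1 + a qⁱ)(1 + b qⁱ)` (characterized by the fact that the
coefficients of `q^N` in the partial products `∏_{i=1}^{M}` with `M ≥ N` all equal `F N`).
Then for every `N ≥ 0` there exists `K` such that for all `k ≥ K` the coefficient of
`q^N` in `P k` equals `F N`; i.e. `P k → (-aq;q)_∞ (-bq;q)_∞` q-adically as `k → ∞`. -/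
theorem weighted_words_schur_limit (Ga Gb Gc : ℕ → R4)
    (ha0 : Ga 0 = 1) (hb0 : Gb 0 = 1) (hc0 : Gc 0 = 1)
    (ha : ∀ k : ℕ, Ga (k + 1) = Gc k + va * vq ^ (k + 1) * Ga k)
    (hb : ∀ k : ℕ, Gb (k + 1) = Ga (k + 1) + vb * vq ^ (k + 1) * Gb k)
    (hc : ∀ k : ℕ, Gc (k + 1) = Gb (k + 1) + vc * vq ^ (k + 1) * Gb k)
    (P : ℕ → S2) (hP : ∀ k : ℕ, P k = substCq (Gc k))
    (F : ℕ → MvPolynomial (Fin 2) ℤ)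
    (hF : ∀ N M : ℕ, N ≤ M →
      F N = (∏ i ∈ Finset.Icc 1 M,
        ((1 + sa * Polynomial.X ^ i) * (1 + sb * Polynomial.X ^ i))).coeff N) :
    ∀ N : ℕ, ∃ K : ℕ, ∀ k : ℕ, K ≤ k → (P k).coeff N = F N := by
  intro N
  refine ⟨N, fun k hk => ?_⟩
  have hdvd : Polynomial.X ^ (k + 2) ∣ P k - abProd sa sb Polynomial.X k := by
    rw [hP]
    exact (dvd_mul_left _ _).trans
      ((isSchurSystem_substCq ha0 hb0 hc0 ha hb hc).dvd_C_sub_abProd isABShift_abShift k)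
  have hcoeff := Polynomial.X_pow_dvd_iff.mp hdvd N (by omega)
  rw [Polynomial.coeff_sub, sub_eq_zero] at hcoeff
  rw [hcoeff, hF N k hk, abProd]
end
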